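/- arXiv:1604.05489 — 5 statements merged into one kernel-verified Lean document; each statement's English description precedes it below -/
import Mathlib

section
/- For every β > 0 and every integer n ≥ 2, the function D(d) = L1(n,d)·L3(n,d) − L2(n,d)² is strictly monotone increasing in d on (0,∞). -/
open Real Filter

/-- Entry `L1` of the Fisher information matrix for an equidistant design with
`n` points and step size `d`, covariance parameter `β`. -/
noncomputable def L1 (β : ℝ) (n : ℕ) (d : ℝ) : ℝ :=
  (2 - (n : ℝ) + n * exp (β * d)) / (exp (β * d) + 1)

/-- Entry `L2` of the Fisher information matrix. -/
noncomputable def L2 (β : ℝ) (n : ℕ) (d : ℝ) : ℝ :=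
  d * ((n : ℝ) - 1) / 2 * L1 β n d

/-- Entry `L3` of the Fisher information matrix. -/
noncomputable def L3 (β : ℝ) (n : ℕ) (d : ℝ) : ℝ :=
  d ^ 2 * ((n : ℝ) - 1) / (exp (2 * β * d) - 1) *
    ((n : ℝ) * (2 * n - 1) * (exp (β * d) - 1) ^ 2 / 6 + n * (exp (β * d) - 1) + 1)

/-!
Write `x = βd` and `u = e^x - 1`. The determinant simplifies to
`(n - 1) / β² · x² p(u) / (u (u + 2)²)` with `p(u) = (2 + n u)(n(n+1)u²/12 + (n+1)u/2 + 1)`,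
so it suffices that `F(x) = x² p(u) / (u (u + 2)²)` increases on `(0, ∞)`. The sign of `F'(x)`
is that of `2 p u (u + 2) + x e^x w(u)` with `w = p' u (u + 2) - p (3u + 2)`. The cubic `w` is
bounded below by `-2 (u + 1)(u + 2)`, the inequality `x ≤ sinh x` gives
`x e^x ≤ u (u + 2) / 2`, and `2p > (u + 1)(u + 2)` then makes `F'` positive.
-/

namespace FisherDet

noncomputable def poly (N u : ℝ) : ℝ :=
  N ^ 2 * (N + 1) / 12 * u ^ 3 + 2 * N * (N + 1) / 3 * u ^ 2 + (2 * N + 1) * u + 2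

noncomputable def polyDeriv (N u : ℝ) : ℝ :=
  N ^ 2 * (N + 1) / 4 * u ^ 2 + 4 * N * (N + 1) / 3 * u + (2 * N + 1)

noncomputable def profile (N x : ℝ) : ℝ :=
  x ^ 2 * poly N (exp x - 1) / ((exp x - 1) * (exp x + 1) ^ 2)

theorem hasDerivAt_poly (N u : ℝ) : HasDerivAt (poly N) (polyDeriv N u) u := by
  have h := ((((hasDerivAt_pow 3 u).const_mul (N ^ 2 * (N + 1) / 12)).add
    ((hasDerivAt_pow 2 u).const_mul (2 * N * (N + 1) / 3))).add
    ((hasDerivAt_id u).const_mul (2 * N + 1))).add_const 2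
  refine (h.congr_deriv ?_).congr_of_eventuallyEq (.of_forall fun v => ?_)
  · simp only [polyDeriv]
    push_cast
    ring
  · simp only [poly, Pi.add_apply, id]

theorem L1_mul_L3_sub_L2_sq {β d : ℝ} (hβ : β ≠ 0) (hd : d ≠ 0) (n : ℕ) :
    L1 β n d * L3 β n d - L2 β n d ^ 2 = ((n : ℝ) - 1) / β ^ 2 * profile n (β * d) := by
  have hu : exp (β * d) - 1 ≠ 0 := sub_ne_zero.2 (by simp [hβ, hd])
  have he : exp (2 * β * d) = exp (β * d) ^ 2 := by rw [← exp_nat_mul]; ring_nf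
  have hv : exp (β * d) ^ 2 - 1 ≠ 0 := by
    rw [show exp (β * d) ^ 2 - 1 = (exp (β * d) - 1) * (exp (β * d) + 1) by ring]
    positivity
  simp only [L1, L2, L3, profile, poly, he]
  field_simp
  ring

theorem mul_exp_le_of_nonneg (x : ℝ) (hx : 0 ≤ x) :
    x * exp x ≤ (exp x - 1) * (exp x + 1) / 2 := by
  have h := mul_le_mul_of_nonneg_right (self_le_sinh_iff.2 hx) (exp_pos x).le
  have hsinh : sinh x * exp x = (exp x - 1) * (exp x + 1) / 2 := by
    rw [sinh_eq, exp_neg]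
    field_simp
    ring
  linarith

theorem neg_le_polyDeriv_sub {N : ℝ} (hN : 2 ≤ N) {u : ℝ} (hu : 0 ≤ u) :
    -(2 * (u + 1) * (u + 2)) ≤ polyDeriv N u * (u * (u + 2)) - poly N u * (3 * u + 2) := by
  have h : polyDeriv N u * (u * (u + 2)) - poly N u * (3 * u + 2) + 2 * (u + 1) * (u + 2)
      = N * (N + 1) * (N - 2) / 3 * u ^ 3 + 4 * N * (N - 2) / 3 * u ^ 2 := by
    simp only [poly, polyDeriv]
    ring
  have hN2 : 0 ≤ N - 2 := by linarith
  have : 0 ≤ N * (N + 1) * (N - 2) / 3 * u ^ 3 + 4 * N * (N - 2) / 3 * u ^ 2 := by positivity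
  linarith

theorem lt_two_mul_poly {N : ℝ} (hN : 2 ≤ N) {u : ℝ} (hu : 0 ≤ u) :
    (u + 1) * (u + 2) < 2 * poly N u := by
  have h : 2 * poly N u - (u + 1) * (u + 2)
      = N ^ 2 * (N + 1) / 6 * u ^ 3 + (4 * N * (N + 1) / 3 - 1) * u ^ 2 + (4 * N - 1) * u + 2 := by
    simp only [poly]
    ring
  have h1 : 0 ≤ 4 * N * (N + 1) / 3 - 1 := by nlinarith
  have h2 : 0 ≤ 4 * N - 1 := by linarith
  have : 0 ≤ N ^ 2 * (N + 1) / 6 * u ^ 3 := by positivity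
  have : 0 ≤ (4 * N * (N + 1) / 3 - 1) * u ^ 2 := by positivity
  have : 0 ≤ (4 * N - 1) * u := by positivity
  linarith

theorem profile_deriv_num_pos {N : ℝ} (hN : 2 ≤ N) {u s : ℝ} (hu : 0 < u) (hs : 0 ≤ s)
    (hsu : s ≤ u * (u + 2) / 2) :
    0 < 2 * poly N u * (u * (u + 2)) +
      s * (polyDeriv N u * (u * (u + 2)) - poly N u * (3 * u + 2)) := by
  have hw := mul_le_mul_of_nonneg_left (neg_le_polyDeriv_sub hN hu.le) hs
  have hsw := mul_le_mul_of_nonneg_right hsu (by positivity : (0 : ℝ) ≤ 2 * (u + 1) * (u + 2))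
  have hp := mul_lt_mul_of_pos_right (lt_two_mul_poly hN hu.le)
    (by positivity : (0 : ℝ) < u * (u + 2))
  nlinarith

theorem hasDerivAt_profile (N : ℝ) {x : ℝ} (hx : x ≠ 0) :
    HasDerivAt (profile N)
      (x * (2 * poly N (exp x - 1) * ((exp x - 1) * (exp x + 1)) + x * exp x *
        (polyDeriv N (exp x - 1) * ((exp x - 1) * (exp x + 1)) - poly N (exp x - 1) *
          (3 * (exp x - 1) + 2))) / ((exp x - 1) ^ 2 * (exp x + 1) ^ 3)) x := by
  have hu : exp x - 1 ≠ 0 := sub_ne_zero.2 (by simpa using hx)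
  have hE : HasDerivAt (fun x => exp x - 1) (exp x) x := (hasDerivAt_exp x).sub_const 1
  have hnum := (hasDerivAt_pow 2 x).mul ((hasDerivAt_poly N (exp x - 1)).comp x hE)
  have hden := hE.mul (((hasDerivAt_exp x).add_const 1).pow 2)
  have hne : (exp x - 1) * (exp x + 1) ^ 2 ≠ 0 := mul_ne_zero hu (by positivity)
  refine HasDerivAt.congr_deriv (f := profile N) (hnum.div hden hne) ?_
  simp only [Pi.mul_apply, Pi.pow_apply, Function.comp_apply]
  field_simp
  push_cast
  ring

theorem profile_strictMonoOn {N : ℝ} (hN : 2 ≤ N) : StrictMonoOn (profile N) (Set.Ioi 0) := by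
  apply strictMonoOn_of_deriv_pos (convex_Ioi 0)
  · exact fun x hx => (hasDerivAt_profile N (ne_of_gt hx)).continuousAt.continuousWithinAt
  · intro x hx
    rw [interior_Ioi] at hx
    have hx : (0 : ℝ) < x := hx
    have hu : 0 < exp x - 1 := by linarith [add_one_lt_exp hx.ne']
    rw [(hasDerivAt_profile N hx.ne').deriv]
    have hpos := profile_deriv_num_pos hN hu (by positivity : 0 ≤ x * exp x)
      (by linarith [mul_exp_le_of_nonneg x hx.le])
    rw [show exp x - 1 + 2 = exp x + 1 by ring] at hpos
    exact div_pos (mul_pos hx hpos) (by positivity)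

end FisherDet

/-- The D-optimality objective `D(d) = L1·L3 − L2²` is strictly monotone
increasing in the step size `d` on `(0,∞)`. -/
theorem D_strictMonoOn (β : ℝ) (hβ : 0 < β) (n : ℕ) (hn : 2 ≤ n) :
    StrictMonoOn (fun d => L1 β n d * L3 β n d - L2 β n d ^ 2) (Set.Ioi (0 : ℝ)) := by
  intro a (ha : 0 < a) b (hb : 0 < b) hab
  have hN : (2 : ℝ) ≤ n := by exact_mod_cast hn
  have hc : 0 < ((n : ℝ) - 1) / β ^ 2 := div_pos (by linarith) (by positivity)
  simp only [FisherDet.L1_mul_L3_sub_L2_sq hβ.ne' ha.ne',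
    FisherDet.L1_mul_L3_sub_L2_sq hβ.ne' hb.ne']
  exact mul_lt_mul_of_pos_left
    (FisherDet.profile_strictMonoOn hN (mul_pos hβ ha) (mul_pos hβ hb)
      (mul_lt_mul_of_pos_left hab hβ)) hc
end

section
/- For every β > 0 and every integer n ≥ 2, the function R(d) = (L1(n,d)+L3(n,d))² / (L1(n,d)·L3(n,d) − L2(n,d)²) attains a global minimum on (0,∞); that is, there exists d* > 0 such that R(d*) ≤ R(d) for all d > 0. Consequently a K-optimal equidistant increasing-domain design exists. -/
open Real Filter

/-- The K-optimality objective `R(d) = (L1+L3)²/(L1·L3 − L2²)`. -/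
noncomputable def Robj (β : ℝ) (n : ℕ) (d : ℝ) : ℝ :=
  (L1 β n d + L3 β n d) ^ 2 / (L1 β n d * L3 β n d - L2 β n d ^ 2)

lemma exp2aux (β d : ℝ) : exp (2 * β * d) = exp (β * d) ^ 2 := by
  rw [sq, ← exp_add]; ring_nf

lemma det_eq (β : ℝ) (n : ℕ) (d : ℝ) (hE : 1 < exp (β * d)) :
    L1 β n d * L3 β n d - L2 β n d ^ 2 =
      d ^ 2 * ((n : ℝ) - 1) * ((n : ℝ) * (exp (β * d) - 1) + 2) *
        ((n : ℝ) * ((n : ℝ) + 1) * (exp (β * d) - 1) ^ 2 / 12 +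
          ((n : ℝ) + 1) * (exp (β * d) - 1) / 2 + 1) /
      ((exp (β * d) - 1) * (exp (β * d) + 1) ^ 2) := by
  have h1 : exp (β * d) + 1 ≠ 0 := by positivity
  have h2 : exp (β * d) - 1 ≠ 0 := by linarith
  simp only [L2, L1, L3]
  rw [exp2aux]
  have h3 : exp (β * d) ^ 2 - 1 ≠ 0 := by nlinarith [exp_pos (β*d)]
  field_simp
  ring

section
variable {β : ℝ} {n : ℕ} {d : ℝ}

lemma hE_gt (hβ : 0 < β) (hd : 0 < d) : 1 < exp (β * d) := by
  have := exp_lt_exp.2 (show (0:ℝ) < β * d by positivity)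
  simpa using this

lemma L1_pos (hβ : 0 < β) (hn : 2 ≤ n) (hd : 0 < d) : 0 < L1 β n d := by
  have hE := hE_gt hβ hd
  have hn' : (2:ℝ) ≤ (n:ℝ) := by exact_mod_cast hn
  unfold L1
  apply div_pos _ (by positivity)
  nlinarith

lemma L1_le (hβ : 0 < β) (hn : 2 ≤ n) (hd : 0 < d) : L1 β n d ≤ (n : ℝ) := by
  have hE := hE_gt hβ hd
  have hn' : (2:ℝ) ≤ (n:ℝ) := by exact_mod_cast hn
  unfold L1
  rw [div_le_iff₀ (by positivity)]
  nlinarith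

lemma L3_pos (hβ : 0 < β) (hn : 2 ≤ n) (hd : 0 < d) : 0 < L3 β n d := by
  have hE := hE_gt hβ hd
  have hn' : (2:ℝ) ≤ (n:ℝ) := by exact_mod_cast hn
  unfold L3
  rw [exp2aux]
  have ht : 0 < exp (β * d) - 1 := by linarith
  apply mul_pos (div_pos (by nlinarith) (by nlinarith))
  nlinarith [mul_nonneg (mul_nonneg (by nlinarith : (0:ℝ) ≤ (n:ℝ)*(2*n-1)) ht.le) ht.le,
    mul_nonneg (by linarith : (0:ℝ) ≤ (n:ℝ)) ht.le]

lemma det_pos (hβ : 0 < β) (hn : 2 ≤ n) (hd : 0 < d) :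
    0 < L1 β n d * L3 β n d - L2 β n d ^ 2 := by
  have hE := hE_gt hβ hd
  have hn' : (2:ℝ) ≤ (n:ℝ) := by exact_mod_cast hn
  rw [det_eq β n d hE]
  have ht : 0 < exp (β * d) - 1 := by linarith
  apply div_pos _ (mul_pos ht (by positivity))
  have h1 : (0:ℝ) < (n : ℝ) * (exp (β * d) - 1) + 2 := by nlinarith
  have h2 : (0:ℝ) < (n : ℝ) * ((n : ℝ) + 1) * (exp (β * d) - 1) ^ 2 / 12 +
      ((n : ℝ) + 1) * (exp (β * d) - 1) / 2 + 1 := by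
    nlinarith [mul_nonneg (mul_nonneg (by nlinarith : (0:ℝ) ≤ (n:ℝ)*((n:ℝ)+1)) ht.le) ht.le]
  exact mul_pos (mul_pos (mul_pos (pow_pos hd 2) (by linarith)) h1) h2

lemma det_le (hβ : 0 < β) (hn : 2 ≤ n) (hd : 0 < d) :
    L1 β n d * L3 β n d - L2 β n d ^ 2 ≤ (n : ℝ) * L3 β n d := by
  have h1 := L1_le hβ hn hd
  have h2 := L3_pos hβ hn hd
  nlinarith [sq_nonneg (L2 β n d)]

lemma Robj_ge (hβ : 0 < β) (hn : 2 ≤ n) (hd : 0 < d) : L3 β n d / n ≤ Robj β n d := by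
  have h1 := L1_pos hβ hn hd
  have h3 := L3_pos hβ hn hd
  have hdet := det_pos hβ hn hd
  have hle := det_le hβ hn hd
  have hn0 : (0:ℝ) < (n:ℝ) := by
    have : (2:ℝ) ≤ (n:ℝ) := by exact_mod_cast hn
    linarith
  have key : L3 β n d ^ 2 / ((n:ℝ) * L3 β n d) ≤ Robj β n d := by
    unfold Robj
    apply div_le_div₀ (by positivity) (by nlinarith) hdet hle
  calc L3 β n d / n = L3 β n d ^ 2 / ((n:ℝ) * L3 β n d) := by
        rw [sq]; rw [mul_comm (n:ℝ), mul_div_mul_left _ _ (ne_of_gt h3)]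
    _ ≤ Robj β n d := key

lemma L3_atTop (hβ : 0 < β) (hn : 2 ≤ n) : Tendsto (fun d => L3 β n d) atTop atTop := by
  have hn' : (2:ℝ) ≤ (n:ℝ) := by exact_mod_cast hn
  refine tendsto_atTop_mono' atTop ?_ ((tendsto_pow_atTop two_ne_zero).atTop_div_const two_pos)
  · filter_upwards [eventually_ge_atTop (max 1 (Real.log 3 / β))] with d hd
    have hd1 : (1:ℝ) ≤ d := le_trans (le_max_left _ _) hd
    have hd0 : 0 < d := by linarith
    have hE3 : (3:ℝ) ≤ exp (β * d) := by
      have h1 : Real.log 3 / β ≤ d := le_trans (le_max_right _ _) hd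
      have h2 : Real.log 3 ≤ β * d := by
        rw [div_le_iff₀ hβ] at h1; linarith [h1]
      calc (3:ℝ) = exp (Real.log 3) := (exp_log (by norm_num)).symm
        _ ≤ exp (β * d) := exp_le_exp.2 h2
    set E := exp (β * d) with hE
    have hEpos : 0 < E := exp_pos _
    have hP : (E ^ 2 - 1) / 2 ≤ (n : ℝ) * (2 * n - 1) * (E - 1) ^ 2 / 6 + n * (E - 1) + 1 := by
      nlinarith [mul_nonneg (by nlinarith : (0:ℝ) ≤ (n:ℝ) * (2 * n - 1) / 6 - 1) (sq_nonneg (E - 1)),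
        mul_nonneg (by linarith : (0:ℝ) ≤ (n:ℝ) - 2) (by nlinarith : (0:ℝ) ≤ E - 1)]
    have hE2 : 0 < E ^ 2 - 1 := by nlinarith
    unfold L3
    rw [exp2aux, ← hE]
    rw [div_mul_eq_mul_div, le_div_iff₀ hE2]
    have hPn : (0:ℝ) ≤ (n : ℝ) * (2 * n - 1) * (E - 1) ^ 2 / 6 + n * (E - 1) + 1 := by nlinarith
    nlinarith [mul_le_mul_of_nonneg_left hP (sq_nonneg d),
      mul_nonneg (mul_nonneg (sq_nonneg d) (by linarith : (0:ℝ) ≤ (n:ℝ) - 2)) hPn]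

lemma expβ_tendsto (β : ℝ) : Tendsto (fun d : ℝ => exp (β * d)) (nhds 0) (nhds 1) := by
  have h : Continuous fun d : ℝ => exp (β * d) := by fun_prop
  simpa using h.tendsto 0

lemma L1_tendsto (β : ℝ) (n : ℕ) : Tendsto (fun d => L1 β n d) (nhds 0) (nhds 1) := by
  have hnum : Tendsto (fun d : ℝ => 2 - (n:ℝ) + n * exp (β * d)) (nhds 0)
      (nhds (2 - (n:ℝ) + n * 1)) := tendsto_const_nhds.add ((expβ_tendsto β).const_mul _)
  have hden : Tendsto (fun d : ℝ => exp (β * d) + 1) (nhds 0) (nhds (1 + 1)) :=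
    (expβ_tendsto β).add tendsto_const_nhds
  have := hnum.div hden (by norm_num)
  have heq : (2 - (n:ℝ) + n * 1) / (1 + 1) = 1 := by ring
  rw [heq] at this
  exact this

lemma L3_tendsto_zero (hβ : 0 < β) (hn : 2 ≤ n) :
    Tendsto (fun d => L3 β n d) (nhdsWithin 0 (Set.Ioi 0)) (nhds 0) := by
  have hn' : (2:ℝ) ≤ (n:ℝ) := by exact_mod_cast hn
  have hfrac : Tendsto (fun d : ℝ => d ^ 2 / (exp (2 * β * d) - 1))
      (nhdsWithin 0 (Set.Ioi 0)) (nhds 0) := by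
    apply tendsto_of_tendsto_of_tendsto_of_le_of_le' (g := fun _ => (0:ℝ))
      (h := fun d => d / (2 * β)) tendsto_const_nhds
    · have h : Tendsto (fun d : ℝ => d / (2 * β)) (nhds 0) (nhds (0 / (2 * β))) :=
        (continuous_id.div_const _).tendsto 0
      simpa using h.mono_left nhdsWithin_le_nhds
    · filter_upwards [eventually_mem_nhdsWithin] with d (hd : 0 < d)
      have : 1 < exp (2 * β * d) := by
        have := exp_lt_exp.2 (show (0:ℝ) < 2 * β * d by positivity); simpa using this
      exact div_nonneg (sq_nonneg d) (by linarith)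
    · filter_upwards [eventually_mem_nhdsWithin] with d (hd : 0 < d)
      have h1 : 2 * β * d + 1 ≤ exp (2 * β * d) := by
        have := add_one_le_exp (2 * β * d); linarith
      have h2 : 0 < exp (2 * β * d) - 1 := by nlinarith
      rw [div_le_div_iff₀ h2 (by positivity)]
      nlinarith
  have hP : Tendsto (fun d : ℝ => ((n:ℝ) - 1) *
      ((n : ℝ) * (2 * n - 1) * (exp (β * d) - 1) ^ 2 / 6 + n * (exp (β * d) - 1) + 1))
      (nhdsWithin 0 (Set.Ioi 0)) (nhds (((n:ℝ) - 1) *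
      ((n : ℝ) * (2 * n - 1) * (1 - 1) ^ 2 / 6 + n * (1 - 1) + 1))) := by
    apply Tendsto.mono_left _ nhdsWithin_le_nhds
    have h : Continuous fun d : ℝ => ((n:ℝ) - 1) *
        ((n : ℝ) * (2 * n - 1) * (exp (β * d) - 1) ^ 2 / 6 + n * (exp (β * d) - 1) + 1) := by
      fun_prop
    simpa using h.tendsto 0
  have := hfrac.mul hP
  rw [zero_mul] at this
  apply this.congr
  intro d
  unfold L3
  ring

lemma L2_tendsto_zero (hβ : 0 < β) (n : ℕ) :
    Tendsto (fun d => L2 β n d) (nhds 0) (nhds 0) := by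
  have h1 : Tendsto (fun d : ℝ => d * ((n:ℝ) - 1) / 2) (nhds 0) (nhds (0 * ((n:ℝ) - 1) / 2)) := by
    have h : Continuous fun d : ℝ => d * ((n:ℝ) - 1) / 2 := by fun_prop
    exact h.tendsto 0
  have := h1.mul (L1_tendsto β n)
  simp only [zero_mul, zero_div, mul_one] at this
  exact this

lemma Robj_atZero (hβ : 0 < β) (hn : 2 ≤ n) :
    Tendsto (fun d => Robj β n d) (nhdsWithin 0 (Set.Ioi 0)) atTop := by
  have hL1 := (L1_tendsto β n).mono_left (nhdsWithin_le_nhds (s := Set.Ioi (0:ℝ)))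
  have hL2 := (L2_tendsto_zero hβ n).mono_left (nhdsWithin_le_nhds (s := Set.Ioi (0:ℝ)))
  have hL3 := L3_tendsto_zero hβ hn
  have hnum : Tendsto (fun d => (L1 β n d + L3 β n d) ^ 2) (nhdsWithin 0 (Set.Ioi 0))
      (nhds 1) := by
    have := (hL1.add hL3).pow 2
    simpa using this
  have hden0 : Tendsto (fun d => L1 β n d * L3 β n d - L2 β n d ^ 2)
      (nhdsWithin 0 (Set.Ioi 0)) (nhds 0) := by
    have := (hL1.mul hL3).sub (hL2.pow 2)
    simpa using this
  have hden : Tendsto (fun d => L1 β n d * L3 β n d - L2 β n d ^ 2)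
      (nhdsWithin 0 (Set.Ioi 0)) (nhdsWithin 0 (Set.Ioi 0)) := by
    rw [tendsto_nhdsWithin_iff]
    refine ⟨hden0, ?_⟩
    filter_upwards [eventually_mem_nhdsWithin] with d (hd : 0 < d)
    exact det_pos hβ hn hd
  have : Tendsto (fun d => (L1 β n d + L3 β n d) ^ 2 *
      (L1 β n d * L3 β n d - L2 β n d ^ 2)⁻¹) (nhdsWithin 0 (Set.Ioi 0)) atTop :=
    hnum.pos_mul_atTop one_pos hden.inv_tendsto_nhdsGT_zero
  apply this.congr
  intro d
  rw [Robj, div_eq_mul_inv]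

lemma Robj_atTop (hβ : 0 < β) (hn : 2 ≤ n) :
    Tendsto (fun d => Robj β n d) atTop atTop := by
  have hn0 : (0:ℝ) < (n:ℝ) := by
    have : (2:ℝ) ≤ (n:ℝ) := by exact_mod_cast hn
    linarith
  refine tendsto_atTop_mono' atTop ?_ ((L3_atTop hβ hn).atTop_div_const hn0)
  filter_upwards [eventually_gt_atTop (0:ℝ)] with d hd
  exact Robj_ge hβ hn hd

lemma Robj_contOn (hβ : 0 < β) (hn : 2 ≤ n) :
    ContinuousOn (fun d => Robj β n d) (Set.Ioi 0) := by
  have hL1 : Continuous fun d => L1 β n d := by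
    apply Continuous.div (by fun_prop) (by fun_prop)
    intro x; positivity
  have hL2 : Continuous fun d => L2 β n d := by
    unfold L2; fun_prop
  have hL3 : ContinuousOn (fun d => L3 β n d) (Set.Ioi 0) := by
    apply ContinuousOn.mul _ (by fun_prop : Continuous fun d : ℝ =>
      (n : ℝ) * (2 * n - 1) * (exp (β * d) - 1) ^ 2 / 6 + n * (exp (β * d) - 1) + 1).continuousOn
    apply ContinuousOn.div (by fun_prop) (by fun_prop)
    intro x hx
    have : 1 < exp (2 * β * x) := by
      have := exp_lt_exp.2 (show (0:ℝ) < 2 * β * x by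
        have : (0:ℝ) < x := hx
        positivity)
      simpa using this
    intro h; rw [sub_eq_zero] at h; rw [← h] at this; linarith
  unfold Robj
  apply ContinuousOn.div
  · exact ((hL1.continuousOn.add hL3).pow 2)
  · exact (hL1.continuousOn.mul hL3).sub (hL2.continuousOn.pow 2)
  · intro x hx
    exact ne_of_gt (det_pos hβ hn hx)

end

/-- The objective `R` attains a global minimum on `(0,∞)`: a K-optimal
equidistant increasing-domain design exists. -/
theorem R_exists_global_min (β : ℝ) (hβ : 0 < β) (n : ℕ) (hn : 2 ≤ n) :
    ∃ dstar > (0 : ℝ), ∀ d > (0 : ℝ), Robj β n dstar ≤ Robj β n d := by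
  set M := Robj β n 1 with hM
  obtain ⟨a, ha, haM⟩ : ∃ a, 0 < a ∧ ∀ d, 0 < d → d ≤ a → M ≤ Robj β n d := by
    have h := (Robj_atZero hβ hn).eventually_ge_atTop M
    rw [eventually_nhdsWithin_iff, Metric.eventually_nhds_iff] at h
    obtain ⟨ε, hε, hball⟩ := h
    refine ⟨ε / 2, by linarith, fun d hd hda => ?_⟩
    exact hball (by rw [Real.dist_eq]; rw [abs_of_pos (by linarith)]; linarith) hd
  obtain ⟨b, hbM⟩ : ∃ b, ∀ d, b ≤ d → M ≤ Robj β n b ∧ M ≤ Robj β n d := by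
    have h := (Robj_atTop hβ hn).eventually_ge_atTop M
    rw [eventually_atTop] at h
    obtain ⟨b, hb⟩ := h
    exact ⟨b, fun d hd => ⟨hb b le_rfl, hb d hd⟩⟩
  set A := min a 1 with hA
  set B := max (max b 1) A with hB
  have hA0 : 0 < A := lt_min ha one_pos
  have hAB : A ≤ B := le_max_right _ _
  have hsub : Set.Icc A B ⊆ Set.Ioi 0 := fun x hx => lt_of_lt_of_le hA0 hx.1
  have hne : (Set.Icc A B).Nonempty := ⟨A, le_refl A, hAB⟩
  obtain ⟨dstar, hdmem, hdmin⟩ :=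
    (isCompact_Icc).exists_isMinOn hne ((Robj_contOn hβ hn).mono hsub)
  have hdstar0 : 0 < dstar := hsub hdmem
  have h1mem : (1:ℝ) ∈ Set.Icc A B :=
    ⟨le_trans (min_le_right _ _) le_rfl, le_trans (le_max_right _ _) (le_max_left _ _)⟩
  have hdM : Robj β n dstar ≤ M := hdmin h1mem
  refine ⟨dstar, hdstar0, fun d hd => ?_⟩
  by_cases hcase : d ∈ Set.Icc A B
  · exact hdmin hcase
  · rw [Set.mem_Icc, not_and_or] at hcase
    rcases hcase with h | h
    · push_neg at h
      have hda : d ≤ a := le_trans h.le (min_le_left _ _)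
      exact le_trans hdM (haM d hd hda)
    · push_neg at h
      have hdb : b ≤ d := le_trans (le_trans (le_max_left _ _) (le_max_left _ _)) h.le
      exact le_trans hdM ((hbM d hdb).2)
end

section
/- For every β > 0, the ratio D(2n)/D(n) converges to 1 as n → ∞, where D(n) = L1(n+1, 1/n)·L3(n+1, 1/n) − L2(n+1, 1/n)² is the determinant of the Fisher information matrix corresponding to the equidistant design ξ_n = {0, 1/n, 2/n, …, 1} on [0,1]. -/
open Real Filter

/-- Determinant of the Fisher information matrix for the equidistant design
`ξ_n = {0, 1/n, …, 1}` on `[0,1]` (that is, `n+1` points with step `1/n`). -/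
noncomputable def Dn (β : ℝ) (n : ℕ) : ℝ :=
  L1 β (n + 1) (1 / n) * L3 β (n + 1) (1 / n) - L2 β (n + 1) (1 / n) ^ 2

/-! With `x = e^{β/n}`, each entry of the Fisher matrix of `ξ_n` is a rational expression in
`x - 1`, `n (x - 1)` and `n (x² - 1)`, which tend to `0`, `β` and `2β`. Hence `D(n)` converges to
`(β + 2)(β² + 6β + 12) / (48β)`, which is positive for `β > 0`, so `D(2n)/D(n) → 1`. -/

open Topology

lemma tendsto_natCast_mul_exp_div_sub_one (c : ℝ) :
    Tendsto (fun n : ℕ => (n : ℝ) * (exp (c / n) - 1)) atTop (𝓝 c) := by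
  have hderiv : HasDerivAt (fun t : ℝ => exp (c * t)) c 0 := by
    simpa using ((hasDerivAt_id (0 : ℝ)).const_mul c).exp
  have hinv : Tendsto (fun n : ℕ => (n : ℝ)⁻¹) atTop (𝓝[≠] 0) :=
    tendsto_inv_atTop_nhdsGT_zero.comp tendsto_natCast_atTop_atTop |>.mono_right
      (nhdsWithin_mono _ fun _ hx => ne_of_gt hx)
  refine ((hasDerivAt_iff_tendsto_slope.mp hderiv).comp hinv).congr fun n => ?_
  simp [slope_def_field, div_eq_mul_inv, mul_comm]

lemma tendsto_exp_div_natCast (c : ℝ) :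
    Tendsto (fun n : ℕ => exp (c / n)) atTop (𝓝 1) := by
  simpa [Function.comp_def] using (continuous_exp.tendsto 0).comp
    (tendsto_const_div_atTop_nhds_zero_nat c)

lemma Filter.Tendsto.comp_div_self {α 𝕜 : Type*} [NormedField 𝕜] {l : Filter α}
    {f : α → 𝕜} {g : α → α} {a : 𝕜} (hf : Tendsto f l (𝓝 a)) (ha : a ≠ 0)
    (hg : Tendsto g l l) :
    Tendsto (fun x => f (g x) / f x) l (𝓝 1) := by
  have h := (hf.comp hg).div hf ha
  rwa [div_self ha] at h

section Design

variable (β : ℝ)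

lemma tendsto_L1_design :
    Tendsto (fun n : ℕ => L1 β (n + 1) (1 / n)) atTop (𝓝 ((β + 2) / 2)) := by
  have hnum : Tendsto (fun n : ℕ => (n : ℝ) * (exp (β / n) - 1) + (exp (β / n) - 1) + 2)
      atTop (𝓝 (β + 2)) := by
    simpa using ((tendsto_natCast_mul_exp_div_sub_one β).add
      ((tendsto_exp_div_natCast β).sub_const 1)).add_const 2
  have hden : Tendsto (fun n : ℕ => exp (β / n) + 1) atTop (𝓝 2) := by
    simpa [one_add_one_eq_two] using (tendsto_exp_div_natCast β).add_const 1
  refine (hnum.div hden two_ne_zero).congr fun n => ?_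
  simp only [Pi.div_apply, L1, mul_one_div]
  push_cast
  ring

lemma L2_design_eq {n : ℕ} (hn : n ≠ 0) :
    L2 β (n + 1) (1 / n) = L1 β (n + 1) (1 / n) / 2 := by
  simp only [L2]
  push_cast
  field_simp
  ring

lemma tendsto_L2_design :
    Tendsto (fun n : ℕ => L2 β (n + 1) (1 / n)) atTop (𝓝 ((β + 2) / 4)) := by
  have := (tendsto_L1_design β).div_const 2
  rw [div_div, show (2 : ℝ) * 2 = 4 by norm_num] at this
  exact this.congr' <| (eventually_ne_atTop 0).mono fun n hn => (L2_design_eq β hn).symm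

variable {β}

lemma tendsto_L3_design (hβ : β ≠ 0) :
    Tendsto (fun n : ℕ => L3 β (n + 1) (1 / n)) atTop
      (𝓝 ((β ^ 2 / 3 + β + 1) / (2 * β))) := by
  have ha := tendsto_natCast_mul_exp_div_sub_one β
  have hx := (tendsto_exp_div_natCast β).sub_const 1
  rw [sub_self] at hx
  -- `hp`, `hq`: `(n + 1)(e^{β/n} - 1) → β` and `(2n + 1)(e^{β/n} - 1) → 2β`, the factors of `L3`
  have hp := ha.add hx
  have hq := (ha.const_mul 2).add hx
  rw [add_zero] at hp hq
  have hinv := (tendsto_natCast_mul_exp_div_sub_one (2 * β)).inv₀ (mul_ne_zero two_ne_zero hβ)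
  have h := hinv.mul ((((hp.mul hq).div_const 6).add hp).add_const 1)
  rw [show (2 * β)⁻¹ * (β * (2 * β) / 6 + β + 1) = (β ^ 2 / 3 + β + 1) / (2 * β) by ring] at h
  refine h.congr' <| (eventually_ne_atTop 0).mono fun n hn => ?_
  have hn' : (n : ℝ) ≠ 0 := Nat.cast_ne_zero.mpr hn
  have hexp : exp (2 * β / n) - 1 ≠ 0 := by
    rw [sub_ne_zero, Ne, exp_eq_one_iff]
    exact div_ne_zero (mul_ne_zero two_ne_zero hβ) hn'
  simp only [L3, mul_one_div]
  push_cast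
  field_simp
  ring

lemma tendsto_Dn (hβ : β ≠ 0) :
    Tendsto (Dn β) atTop (𝓝 ((β + 2) * (β ^ 2 + 6 * β + 12) / (48 * β))) := by
  have h := ((tendsto_L1_design β).mul (tendsto_L3_design hβ)).sub ((tendsto_L2_design β).pow 2)
  rwa [show (β + 2) / 2 * ((β ^ 2 / 3 + β + 1) / (2 * β)) - ((β + 2) / 4) ^ 2 =
    (β + 2) * (β ^ 2 + 6 * β + 12) / (48 * β) by field_simp; ring] at h

end Design

/-- Doubling the number of sub-intervals of a fixed design interval has
asymptotically no effect on the determinant: `D(2n)/D(n) → 1`. -/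
theorem D_double_ratio_tendsto_one (β : ℝ) (hβ : 0 < β) :
    Tendsto (fun n : ℕ => Dn β (2 * n) / Dn β n) atTop (nhds 1) :=
  (tendsto_Dn hβ.ne').comp_div_self (by positivity)
    (tendsto_id.const_mul_atTop' two_pos)
end

section
/- Let β, γ > 0, let 0 ≤ s₁ < s₂ < … < s_n and 0 ≤ t₁ < t₂ < … < t_m with n, m ≥ 2. Let P be the n×n matrix with entries P_{ij} = exp(−β|s_i − s_j|), Q the m×m matrix with entries Q_{ij} = exp(−γ|t_i − t_j|), and let G be the 3×(nm) matrix whose column indexed by the pair (i,j) is (1, s_i, t_j)ᵀ. Then P and Q are invertible and G·(P ⊗ Q)⁻¹·Gᵀ equals the 3×3 matrix [[L1·M1, L2·M1, L1·M2], [L2·M1, L3·M1, L2·M2], [L1·M2, L2·M2, L1·M3]], where, with p_i = exp(−β(s_{i+1}−s_i)) and q_j = exp(−γ(t_{j+1}−t_j)): L1 = 1 + Σ_{i=1}^{n−1}(1−p_i)/(1+p_i), L2 = s₁ + Σ_{i=1}^{n−1}(s_{i+1}−s_i p_i)/(1+p_i), L3 = s₁² + Σ_{i=1}^{n−1}(s_{i+1}−s_i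 p_i)²/(1−p_i²), and M1 = 1 + Σ_{j=1}^{m−1}(1−q_j)/(1+q_j), M2 = t₁ + Σ_{j=1}^{m−1}(t_{j+1}−t_j q_j)/(1+q_j), M3 = t₁² + Σ_{j=1}^{m−1}(t_{j+1}−t_j q_j)²/(1−q_j²). -/
/-!
For increasing points the Ornstein–Uhlenbeck correlation matrix `P` is that of an AR(1) chain:
with `p a = exp (-β (s (a + 1) - s a))`, the bidiagonal whitening matrix `A`, which sends `x` to
the innovations `x 0, x (a + 1) - p a * x a`, satisfies `A P Aᵀ = diag (1, 1 - p 0 ^ 2, …)`.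
Hence `P⁻¹ = Aᵀ D⁻¹ A`, every form `vᵀ P⁻¹ w` is a sum of one-step terms, and at the trend
vectors `1, s` it gives `L1, L2, L3`. On the grid, `(P ⊗ Q)⁻¹ = P⁻¹ ⊗ Q⁻¹` and the rows `1, s, t`
of `G` are Kronecker products of the rows `1, s` and `1, t` of the one-dimensional designs, so
each Fisher entry is a product of a one-dimensional entry in `s` and one in `t`.
-/

open Real Matrix Finset
open scoped Kronecker

namespace Matrix.BlockTriangular

variable {m R : Type*} [LinearOrder m]

lemma mul_apply_self [Fintype m] [NonUnitalNonAssocSemiring R] {M N : Matrix m m R}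
    (hM : M.BlockTriangular id) (hN : N.BlockTriangular id) (i : m) :
    (M * N) i i = M i i * N i i := by
  rw [mul_apply, Finset.sum_eq_single i]
  · intro k _ hki
    rcases hki.lt_or_gt with hk | hk
    · rw [hM hk, zero_mul]
    · rw [hN hk, mul_zero]
  · simp

lemma eq_diagonal_of_isSymm [DecidableEq m] [Zero R] {M : Matrix m m R}
    (hM : M.BlockTriangular id) (hsymm : M.IsSymm) : M = diagonal M.diag := by
  ext i j
  rcases lt_trichotomy i j with h | rfl | h
  · rw [← hsymm.apply i j, hM h, diagonal_apply_ne _ h.ne]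
  · simp
  · rw [hM h, diagonal_apply_ne _ h.ne']

end Matrix.BlockTriangular

lemma Matrix.mul_mul_transpose_apply {l n R : Type*} [Fintype n] [CommSemiring R]
    (A : Matrix l n R) (B : Matrix n n R) (i j : l) : (A * B * Aᵀ) i j = A i ⬝ᵥ B *ᵥ A j := by
  rw [Matrix.mul_assoc]
  simp [mul_apply, dotProduct, mulVec]

lemma Matrix.submatrix_id_mul_mul_transpose {l m n R : Type*} [Fintype n] [CommSemiring R]
    (K : Matrix m n R) (M : Matrix n n R) (e : l → m) :
    K.submatrix e id * M * (K.submatrix e id)ᵀ = (K * M * Kᵀ).submatrix e e := by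
  ext i j
  simp only [submatrix_apply, mul_mul_transpose_apply]
  rfl

namespace OrnsteinUhlenbeck

variable (β : ℝ) (n : ℕ) (s : ℕ → ℝ)

noncomputable def corr : Matrix (Fin n) (Fin n) ℝ :=
  of fun i j => exp (-β * |s i - s j|)

noncomputable def lagCorr (a : ℕ) : ℝ :=
  exp (-β * (s (a + 1) - s a))

noncomputable def whitening : Matrix (Fin n) (Fin n) ℝ :=
  1 - of fun i j : Fin n => if (j : ℕ) + 1 = i then lagCorr β s j else 0

noncomputable def innovationVar (i : Fin n) : ℝ :=
  if (i : ℕ) = 0 then 1 else 1 - lagCorr β s (i - 1) ^ 2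

variable {n s}

lemma whitening_mulVec_of_eq_zero (v : ℕ → ℝ) {i : Fin n} (hi : (i : ℕ) = 0) :
    (whitening β n s *ᵥ fun j => v j) i = v 0 := by
  rw [whitening, sub_mulVec, one_mulVec, Pi.sub_apply, hi, sub_eq_self, mulVec, dotProduct]
  exact Finset.sum_eq_zero fun j _ => by simp [hi]

lemma whitening_mulVec_of_eq_succ (v : ℕ → ℝ) {i : Fin n} {a : ℕ} (hi : (i : ℕ) = a + 1) :
    (whitening β n s *ᵥ fun j => v j) i = v (a + 1) - lagCorr β s a * v a := by
  rw [whitening, sub_mulVec, one_mulVec, Pi.sub_apply, hi]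
  congr 1
  rw [mulVec, dotProduct, Finset.sum_eq_single ⟨a, by omega⟩]
  · simp [hi]
  · intro j _ hj
    have : (j : ℕ) + 1 ≠ i := fun h => hj (Fin.ext <| by dsimp; omega)
    simp [this]
  · simp

lemma lagCorr_mul_exp (hs : MonotoneOn s (Set.Iio n)) {a k : ℕ} (ha : a + 1 < n) (hk : k ≤ a) :
    lagCorr β s a * exp (-β * |s a - s k|) = exp (-β * |s (a + 1) - s k|) := by
  have hka : s k ≤ s a := hs (by simp; omega) (by simp; omega) hk
  have hab : s a ≤ s (a + 1) := hs (by simp; omega) (by simp; omega) (by omega)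
  rw [lagCorr, ← exp_add, abs_of_nonneg (by linarith), abs_of_nonneg (by linarith)]
  ring_nf

lemma whitening_mul_corr_blockTriangular (hs : MonotoneOn s (Set.Iio n)) :
    (whitening β n s * corr β n s).BlockTriangular id := by
  intro i k (hki : k < i)
  obtain ⟨a, ha⟩ := Nat.exists_eq_add_one_of_ne_zero (by omega : (i : ℕ) ≠ 0)
  change (whitening β n s *ᵥ fun j => exp (-β * |s j - s k|)) i = 0
  rw [whitening_mulVec_of_eq_succ β (fun j => exp (-β * |s j - s k|)) ha,
    lagCorr_mul_exp β hs (by omega) (by omega), sub_self]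

lemma whitening_mul_corr_apply_self (hs : MonotoneOn s (Set.Iio n)) (i : Fin n) :
    (whitening β n s * corr β n s) i i = innovationVar β n s i := by
  change (whitening β n s *ᵥ fun j => exp (-β * |s j - s i|)) i = _
  by_cases hi : (i : ℕ) = 0
  · rw [whitening_mulVec_of_eq_zero β (fun j => exp (-β * |s j - s i|)) hi,
      innovationVar, if_pos hi, hi]
    simp
  obtain ⟨a, ha⟩ := Nat.exists_eq_add_one_of_ne_zero hi
  have hab : s a ≤ s (a + 1) := hs (by simp; omega) (by simp; omega) (by omega)
  rw [whitening_mulVec_of_eq_succ β (fun j => exp (-β * |s j - s i|)) ha, innovationVar,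
    if_neg hi, ha, Nat.add_sub_cancel, sub_self, abs_zero, mul_zero, exp_zero, abs_sub_comm,
    abs_of_nonneg (sub_nonneg.2 hab), ← lagCorr, sq]

variable (n s) in
lemma whitening_transpose_blockTriangular : (whitening β n s)ᵀ.BlockTriangular id := by
  intro i j (hji : j < i)
  have h₁ : j ≠ i := hji.ne
  have h₂ : (i : ℕ) + 1 ≠ j := by omega
  simp [whitening, h₁, h₂]

-- `A P` and `Aᵀ` are upper triangular and `A P Aᵀ` is symmetric, so it is diagonal.
theorem whitening_mul_corr_mul_transpose (hs : MonotoneOn s (Set.Iio n)) :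
    whitening β n s * corr β n s * (whitening β n s)ᵀ = diagonal (innovationVar β n s) := by
  have htri := (whitening_mul_corr_blockTriangular β hs).mul
    (whitening_transpose_blockTriangular β n s)
  have hsymm : (whitening β n s * corr β n s * (whitening β n s)ᵀ).IsSymm := by
    rw [IsSymm, transpose_mul, transpose_mul, transpose_transpose, ← Matrix.mul_assoc]
    congr 2
    ext i j
    simp [corr, abs_sub_comm]
  rw [htri.eq_diagonal_of_isSymm hsymm]
  congr 1
  ext i
  rw [diag_apply, (whitening_mul_corr_blockTriangular β hs).mul_apply_self
    (whitening_transpose_blockTriangular β n s), whitening_mul_corr_apply_self β hs]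
  simp [whitening]

lemma lagCorr_lt_one (hβ : 0 < β) {a : ℕ} (h : s a < s (a + 1)) : lagCorr β s a < 1 := by
  rw [lagCorr, exp_lt_one_iff]
  nlinarith

lemma innovationVar_pos (hβ : 0 < β) (hs : StrictMonoOn s (Set.Iio n)) (i : Fin n) :
    0 < innovationVar β n s i := by
  rw [innovationVar]
  split_ifs with hi
  · exact one_pos
  obtain ⟨a, ha⟩ := Nat.exists_eq_add_one_of_ne_zero hi
  rw [ha, Nat.add_sub_cancel]
  have hp := lagCorr_lt_one β hβ (hs (by simp; omega) (by simp; omega) (lt_add_one a))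
  have hp₀ : 0 < lagCorr β s a := exp_pos _
  nlinarith

variable (n s) in
noncomputable def precision : Matrix (Fin n) (Fin n) ℝ :=
  (whitening β n s)ᵀ * diagonal (innovationVar β n s)⁻¹ * whitening β n s

theorem precision_mul_corr (hβ : 0 < β) (hs : StrictMonoOn s (Set.Iio n)) :
    precision β n s * corr β n s = 1 := by
  set A := whitening β n s
  have hD : diagonal (innovationVar β n s)⁻¹ * diagonal (innovationVar β n s) = 1 := by
    rw [diagonal_mul_diagonal, ← diagonal_one]
    exact congrArg diagonal (funext fun i => inv_mul_cancel₀ (innovationVar_pos β hβ hs i).ne')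
  have h : diagonal (innovationVar β n s)⁻¹ * (A * corr β n s) * Aᵀ = 1 := by
    rw [Matrix.mul_assoc, whitening_mul_corr_mul_transpose β hs.monotoneOn, hD]
  simpa only [precision, Matrix.mul_assoc] using mul_eq_one_comm.mp h

theorem isUnit_det_corr (hβ : 0 < β) (hs : StrictMonoOn s (Set.Iio n)) :
    IsUnit (corr β n s).det :=
  isUnit_det_of_left_inverse (precision_mul_corr β hβ hs)

theorem corr_inv (hβ : 0 < β) (hs : StrictMonoOn s (Set.Iio n)) :
    (corr β n s)⁻¹ = precision β n s :=
  inv_eq_left_inv (precision_mul_corr β hβ hs)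

theorem dotProduct_corr_inv_mulVec (hβ : 0 < β) (hs : StrictMonoOn s (Set.Iio n)) (hn : n ≠ 0)
    (v w : ℕ → ℝ) :
    (fun i : Fin n => v i) ⬝ᵥ ((corr β n s)⁻¹ *ᵥ fun i => w i) =
      v 0 * w 0 + ∑ a ∈ range (n - 1), (v (a + 1) - lagCorr β s a * v a) *
        (w (a + 1) - lagCorr β s a * w a) / (1 - lagCorr β s a ^ 2) := by
  rw [corr_inv β hβ hs, precision, ← mulVec_mulVec, ← mulVec_mulVec, dotProduct_mulVec, vecMul_transpose,
    dotProduct]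
  obtain ⟨k, rfl⟩ := Nat.exists_eq_add_one_of_ne_zero hn
  rw [Fin.sum_univ_succ, Nat.add_sub_cancel, ← Fin.sum_univ_eq_sum_range]
  congr 1
  · rw [mulVec_diagonal, whitening_mulVec_of_eq_zero β v (Fin.val_zero (k + 1)),
      whitening_mulVec_of_eq_zero β w (Fin.val_zero (k + 1))]
    simp [innovationVar]
  · refine Finset.sum_congr rfl fun i _ => ?_
    rw [mulVec_diagonal, whitening_mulVec_of_eq_succ β v (Fin.val_succ i),
      whitening_mulVec_of_eq_succ β w (Fin.val_succ i)]
    rw [Pi.inv_apply, innovationVar, Fin.val_succ, if_neg (Nat.succ_ne_zero _), Nat.add_sub_cancel]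
    ring

variable (n s) in
def trendDesign : Matrix (Fin 2) (Fin n) ℝ :=
  of fun k i => ![fun _ => 1, s] k i

lemma one_sub_mul_div_one_sub_sq {p : ℝ} (hp : p ≠ 1) (z : ℝ) :
    (1 - p) * z / (1 - p ^ 2) = z / (1 + p) := by
  rw [show 1 - p ^ 2 = (1 - p) * (1 + p) by ring, mul_div_mul_left _ _ (sub_ne_zero.2 hp.symm)]

theorem trendDesign_mul_corr_inv_mul_transpose (hβ : 0 < β) (hs : StrictMonoOn s (Set.Iio n))
    (hn : n ≠ 0) :
    trendDesign n s * (corr β n s)⁻¹ * (trendDesign n s)ᵀ =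
      !![1 + ∑ a ∈ range (n - 1), (1 - lagCorr β s a) / (1 + lagCorr β s a),
         s 0 + ∑ a ∈ range (n - 1), (s (a + 1) - s a * lagCorr β s a) / (1 + lagCorr β s a);
         s 0 + ∑ a ∈ range (n - 1), (s (a + 1) - s a * lagCorr β s a) / (1 + lagCorr β s a),
         s 0 ^ 2 + ∑ a ∈ range (n - 1),
           (s (a + 1) - s a * lagCorr β s a) ^ 2 / (1 - lagCorr β s a ^ 2)] := by
  ext k l
  rw [mul_mul_transpose_apply]
  refine (dotProduct_corr_inv_mulVec β hβ hs hn (![fun _ => 1, s] k) (![fun _ => 1, s] l)).trans ?_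
  have hp : ∀ a ∈ range (n - 1), lagCorr β s a ≠ 1 := fun a ha =>
    (lagCorr_lt_one β hβ (hs (by simp at ha ⊢; omega) (by simp at ha ⊢; omega) (lt_add_one a))).ne
  fin_cases k <;> fin_cases l <;>
    simp only [Fin.zero_eta, Fin.mk_one, Fin.isValue, cons_val_zero, cons_val_one, cons_val_fin_one,
      cons_val', of_apply, one_mul, mul_one, add_right_inj]
  · exact sum_congr rfl fun a ha => one_sub_mul_div_one_sub_sq (hp a ha) _
  · refine sum_congr rfl fun a ha => ?_
    rw [one_sub_mul_div_one_sub_sq (hp a ha), mul_comm (s a)]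
  · refine sum_congr rfl fun a ha => ?_
    rw [mul_comm _ (1 - _), one_sub_mul_div_one_sub_sq (hp a ha), mul_comm (s a)]
  · rw [sq]
    exact congrArg _ (sum_congr rfl fun a _ => by ring)

end OrnsteinUhlenbeck

open OrnsteinUhlenbeck

theorem FIM_sheet_general (β γ : ℝ) (hβ : 0 < β) (hγ : 0 < γ)
    (n m : ℕ) (hn : 2 ≤ n) (hm : 2 ≤ m)
    (s t : ℕ → ℝ)
    (hs : ∀ i, i + 1 < n → s i < s (i + 1))
    (ht : ∀ j, j + 1 < m → t j < t (j + 1)) :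
    let p : ℕ → ℝ := fun i => exp (-β * (s (i + 1) - s i))
    let q : ℕ → ℝ := fun j => exp (-γ * (t (j + 1) - t j))
    let P : Matrix (Fin n) (Fin n) ℝ := Matrix.of fun i j => exp (-β * |s i.1 - s j.1|)
    let Q : Matrix (Fin m) (Fin m) ℝ := Matrix.of fun i j => exp (-γ * |t i.1 - t j.1|)
    let G : Matrix (Fin 3) (Fin n × Fin m) ℝ :=
      Matrix.of fun k ij => ![(1 : ℝ), s ij.1.1, t ij.2.1] k
    let l1 : ℝ := 1 + ∑ i ∈ Finset.range (n - 1), (1 - p i) / (1 + p i)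
    let l2 : ℝ := s 0 + ∑ i ∈ Finset.range (n - 1), (s (i + 1) - s i * p i) / (1 + p i)
    let l3 : ℝ := s 0 ^ 2 + ∑ i ∈ Finset.range (n - 1), (s (i + 1) - s i * p i) ^ 2 / (1 - p i ^ 2)
    let m1 : ℝ := 1 + ∑ j ∈ Finset.range (m - 1), (1 - q j) / (1 + q j)
    let m2 : ℝ := t 0 + ∑ j ∈ Finset.range (m - 1), (t (j + 1) - t j * q j) / (1 + q j)
    let m3 : ℝ := t 0 ^ 2 + ∑ j ∈ Finset.range (m - 1), (t (j + 1) - t j * q j) ^ 2 / (1 - q j ^ 2)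
    IsUnit P.det ∧ IsUnit Q.det ∧
      G * (Matrix.kroneckerMap (· * ·) P Q)⁻¹ * G.transpose =
        !![l1 * m1, l2 * m1, l1 * m2;
           l2 * m1, l3 * m1, l2 * m2;
           l1 * m2, l2 * m2, l1 * m3] := by
  intro p q P Q G l1 l2 l3 m1 m2 m3
  have hs' : StrictMonoOn s (Set.Iio n) :=
    strictMonoOn_of_lt_add_one Set.ordConnected_Iio fun a _ _ ha => hs a ha
  have ht' : StrictMonoOn t (Set.Iio m) :=
    strictMonoOn_of_lt_add_one Set.ordConnected_Iio fun a _ _ ha => ht a ha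
  have hG : G = (trendDesign n s ⊗ₖ trendDesign m t).submatrix ![(0, 0), (1, 0), (0, 1)] id := by
    ext k ij
    fin_cases k <;> simp [G, trendDesign]
  change IsUnit (corr β n s).det ∧ IsUnit (corr γ m t).det ∧
    G * (corr β n s ⊗ₖ corr γ m t)⁻¹ * Gᵀ = _
  refine ⟨isUnit_det_corr β hβ hs', isUnit_det_corr γ hγ ht', ?_⟩
  rw [hG, inv_kronecker, submatrix_id_mul_mul_transpose, ← kroneckerMap_transpose,
    ← mul_kronecker_mul, ← mul_kronecker_mul,
    trendDesign_mul_corr_inv_mul_transpose β hβ hs' (by omega),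
    trendDesign_mul_corr_inv_mul_transpose γ hγ ht' (by omega)]
  ext k l
  fin_cases k <;> fin_cases l <;> rfl

/-- The Fisher information matrix of the linear-trend Ornstein–Uhlenbeck sheet
model on a regular grid `{(s_i, t_j)}` equals the stated 3×3 matrix built from
the one-dimensional quantities `L1, L2, L3` and `M1, M2, M3`.  Here `P ⊗ Q` is
the covariance (correlation) matrix of the grid observations and `G` is the
design matrix with columns `(1, s_i, t_j)ᵀ`. -/
theorem FIM_sheet (β γ : ℝ) (hβ : 0 < β) (hγ : 0 < γ)
    (n m : ℕ) (hn : 2 ≤ n) (hm : 2 ≤ m)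
    (s t : ℕ → ℝ) (hs0 : 0 ≤ s 0) (ht0 : 0 ≤ t 0)
    (hs : ∀ i, i + 1 < n → s i < s (i + 1))
    (ht : ∀ j, j + 1 < m → t j < t (j + 1)) :
    let p : ℕ → ℝ := fun i => exp (-β * (s (i + 1) - s i))
    let q : ℕ → ℝ := fun j => exp (-γ * (t (j + 1) - t j))
    let P : Matrix (Fin n) (Fin n) ℝ := Matrix.of fun i j => exp (-β * |s i.1 - s j.1|)
    let Q : Matrix (Fin m) (Fin m) ℝ := Matrix.of fun i j => exp (-γ * |t i.1 - t j.1|)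
    let G : Matrix (Fin 3) (Fin n × Fin m) ℝ :=
      Matrix.of fun k ij => ![(1 : ℝ), s ij.1.1, t ij.2.1] k
    let l1 : ℝ := 1 + ∑ i ∈ Finset.range (n - 1), (1 - p i) / (1 + p i)
    let l2 : ℝ := s 0 + ∑ i ∈ Finset.range (n - 1), (s (i + 1) - s i * p i) / (1 + p i)
    let l3 : ℝ := s 0 ^ 2 + ∑ i ∈ Finset.range (n - 1), (s (i + 1) - s i * p i) ^ 2 / (1 - p i ^ 2)
    let m1 : ℝ := 1 + ∑ j ∈ Finset.range (m - 1), (1 - q j) / (1 + q j)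
    let m2 : ℝ := t 0 + ∑ j ∈ Finset.range (m - 1), (t (j + 1) - t j * q j) / (1 + q j)
    let m3 : ℝ := t 0 ^ 2 + ∑ j ∈ Finset.range (m - 1), (t (j + 1) - t j * q j) ^ 2 / (1 - q j ^ 2)
    IsUnit P.det ∧ IsUnit Q.det ∧
      G * (Matrix.kroneckerMap (· * ·) P Q)⁻¹ * G.transpose =
        !![l1 * m1, l2 * m1, l1 * m2;
           l2 * m1, l3 * m1, l2 * m2;
           l1 * m2, l2 * m2, l1 * m3] :=
  FIM_sheet_general β γ hβ hγ n m hn hm s t hs ht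
end

section
/- Let β > 0, n ≥ 2, and s₁ < s₂ < … < s_n be real numbers; set d_i = s_{i+1} − s_i and p_i = exp(−β d_i) for i = 1,…,n−1. Let C be the n×n matrix with entries C_{ij} = exp(−β|s_i − s_j|) (equivalently, C_{ij} = ∏_{k=min(i,j)}^{max(i,j)−1} p_k for i ≠ j and C_{ii} = 1). Then C is invertible and its inverse is the symmetric tridiagonal matrix A with A_{11} = 1/(1−p₁²), A_{nn} = 1/(1−p_{n−1}²), A_{kk} = (1−p_k² p_{k−1}²)/((p_k²−1)(p_{k−1}²−1)) = 1/(1−p_k²) + p_{k−1}²/(1−p_{k−1}²) for k = 2,…,n−1, A_{k,k+1} = A_{k+1,k} = p_k/(p_k² − 1) for k = 1,…,n−1, and all other entries zero. -/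
open Real Filter

noncomputable def ouP (β : ℝ) (s : ℕ → ℝ) (k : ℕ) : ℝ := exp (-β * (s (k + 1) - s k))

noncomputable def ouC (β : ℝ) (s : ℕ → ℝ) (i j : ℕ) : ℝ := exp (-β * |s i - s j|)

noncomputable def ouA (n : ℕ) (p : ℕ → ℝ) (k l : ℕ) : ℝ :=
  if k = l then
    (if k = 0 then 1 / (1 - p 0 ^ 2)
     else if k = n - 1 then 1 / (1 - p (n - 2) ^ 2)
     else 1 / (1 - p k ^ 2) + p (k - 1) ^ 2 / (1 - p (k - 1) ^ 2))
  else if l = k + 1 then p k / (p k ^ 2 - 1)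
  else if k = l + 1 then p l / (p l ^ 2 - 1)
  else 0

lemma ou_mono (n : ℕ) (s : ℕ → ℝ) (hs : ∀ i, i + 1 < n → s i < s (i + 1)) :
    ∀ b, b < n → ∀ a, a ≤ b → s a ≤ s b := by
  intro b
  induction b with
  | zero => intro _ a ha; simp [Nat.le_zero.mp ha]
  | succ b ih =>
    intro hb a ha
    rcases Nat.eq_or_lt_of_le ha with rfl | h
    · exact le_refl _
    · exact le_trans (ih (by omega) a (Nat.lt_succ_iff.mp h))
        (le_of_lt (hs b hb))

lemma ouC_symm (β : ℝ) (s : ℕ → ℝ) (i j : ℕ) : ouC β s i j = ouC β s j i := by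
  simp [ouC, abs_sub_comm]

lemma ouC_self (β : ℝ) (s : ℕ → ℝ) (i : ℕ) : ouC β s i i = 1 := by
  simp [ouC]

lemma ouC_eq (β : ℝ) (n : ℕ) (s : ℕ → ℝ) (hs : ∀ i, i + 1 < n → s i < s (i + 1))
    {a b : ℕ} (hab : a ≤ b) (hb : b < n) :
    ouC β s a b = exp (-β * (s b - s a)) := by
  have h := ou_mono n s hs b hb a hab
  rw [ouC, abs_of_nonpos (by linarith)]
  ring_nf

lemma ouC_mul_right (β : ℝ) (n : ℕ) (s : ℕ → ℝ) (hs : ∀ i, i + 1 < n → s i < s (i + 1))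
    {a b : ℕ} (hab : a ≤ b) (hb : b + 1 < n) :
    ouC β s a (b + 1) = ouC β s a b * ouP β s b := by
  rw [ouC_eq β n s hs (le_trans hab (Nat.le_succ b)) hb,
    ouC_eq β n s hs hab (by omega), ouP, ← exp_add]
  congr 1
  ring

lemma ouC_mul_left (β : ℝ) (n : ℕ) (s : ℕ → ℝ) (hs : ∀ i, i + 1 < n → s i < s (i + 1))
    {a b : ℕ} (hab : a < b) (hb : b < n) :
    ouC β s a b = ouP β s a * ouC β s (a + 1) b := by
  rw [ouC_eq β n s hs (le_of_lt hab) hb, ouC_eq β n s hs hab hb, ouP, ← exp_add]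
  congr 1
  ring

lemma ouP_pos (β : ℝ) (s : ℕ → ℝ) (k : ℕ) : 0 < ouP β s k := exp_pos _

lemma ouP_lt_one (β : ℝ) (hβ : 0 < β) (n : ℕ) (s : ℕ → ℝ)
    (hs : ∀ i, i + 1 < n → s i < s (i + 1)) {k : ℕ} (hk : k + 1 < n) :
    ouP β s k < 1 := by
  have := hs k hk
  rw [ouP]
  rw [exp_lt_one_iff]
  nlinarith

lemma ou_sq_pos (β : ℝ) (hβ : 0 < β) (n : ℕ) (s : ℕ → ℝ)
    (hs : ∀ i, i + 1 < n → s i < s (i + 1)) {k : ℕ} (hk : k + 1 < n) :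
    0 < 1 - ouP β s k ^ 2 := by
  have h1 := ouP_lt_one β hβ n s hs hk
  have h0 := ouP_pos β s k
  nlinarith

lemma ou_key (β : ℝ) (hβ : 0 < β) (n : ℕ) (hn : 2 ≤ n) (s : ℕ → ℝ)
    (hs : ∀ i, i + 1 < n → s i < s (i + 1)) {i l : ℕ} (hi : i < n) (hl : l < n) :
    ∑ j ∈ Finset.range n, ouC β s i j * ouA n (ouP β s) j l
      = if i = l then 1 else 0 := by
  by_cases hl0 : l = 0
  · subst hl0
    have hsub : ({0, 1} : Finset ℕ) ⊆ Finset.range n := by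
      intro x hx
      simp only [Finset.mem_insert, Finset.mem_singleton] at hx
      simp only [Finset.mem_range]
      omega
    rw [← Finset.sum_subset hsub (by
      intro x hx hx'
      simp only [Finset.mem_insert, Finset.mem_singleton, not_or] at hx'
      simp [ouA, hx'.1, hx'.2])]
    rw [Finset.sum_pair (by norm_num : (0 : ℕ) ≠ 1)]
    have hA00 : ouA n (ouP β s) 0 0 = 1 / (1 - ouP β s 0 ^ 2) := by simp [ouA]
    have hA10 : ouA n (ouP β s) 1 0 = ouP β s 0 / (ouP β s 0 ^ 2 - 1) := by
      rw [ouA, if_neg (by omega), if_neg (by omega), if_pos rfl]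
    have hden := ou_sq_pos β hβ n s hs (show 0 + 1 < n by omega)
    have e1 : 1 - ouP β s 0 ^ 2 ≠ 0 := ne_of_gt hden
    have e2 : ouP β s 0 ^ 2 - 1 ≠ 0 := by intro hx; exact e1 (by linarith)
    by_cases hi0 : i = 0
    · subst hi0
      rw [if_pos rfl, ouC_self, hA00, hA10]
      have hc01 : ouC β s 0 1 = ouP β s 0 := by
        have h := ouC_mul_right β n s hs (le_refl 0) (by omega)
        rwa [ouC_self, one_mul] at h
      rw [hc01]
      field_simp [e1, e2]
      ring
    · rw [if_neg hi0, hA00, hA10]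
      have hci0 : ouC β s i 0 = ouP β s 0 * ouC β s i 1 := by
        rw [ouC_symm β s i 0, ouC_mul_left β n s hs (show 0 < i by omega) hi,
          ouC_symm β s 1 i]
      rw [hci0]
      field_simp [e1, e2]
      ring
  · by_cases hln : l = n - 1
    · subst hln
      have hsub : ({n - 2, n - 1} : Finset ℕ) ⊆ Finset.range n := by
        intro x hx
        simp only [Finset.mem_insert, Finset.mem_singleton] at hx
        simp only [Finset.mem_range]
        omega
      rw [← Finset.sum_subset hsub (by
        intro x hx hx'
        simp only [Finset.mem_insert, Finset.mem_singleton, not_or] at hx'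
        simp only [Finset.mem_range] at hx
        rw [ouA, if_neg hx'.2, if_neg (by omega), if_neg (by omega), mul_zero])]
      rw [Finset.sum_pair (show n - 2 ≠ n - 1 by omega)]
      have hA1 : ouA n (ouP β s) (n - 2) (n - 1)
          = ouP β s (n - 2) / (ouP β s (n - 2) ^ 2 - 1) := by
        rw [ouA, if_neg (by omega), if_pos (by omega)]
      have hA2 : ouA n (ouP β s) (n - 1) (n - 1) = 1 / (1 - ouP β s (n - 2) ^ 2) := by
        rw [ouA, if_pos rfl, if_neg (by omega), if_pos rfl]
      have hden := ou_sq_pos β hβ n s hs (show n - 2 + 1 < n by omega)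
      have e1 : 1 - ouP β s (n - 2) ^ 2 ≠ 0 := ne_of_gt hden
      have e2 : ouP β s (n - 2) ^ 2 - 1 ≠ 0 := by intro hx; exact e1 (by linarith)
      have hn21 : n - 2 + 1 = n - 1 := by omega
      by_cases hin : i = n - 1
      · subst hin
        rw [if_pos rfl, hA1, hA2, ouC_self]
        have hc : ouC β s (n - 1) (n - 2) = ouP β s (n - 2) := by
          rw [ouC_symm]
          have h := ouC_mul_right β n s hs (le_refl (n - 2)) (by omega)
          rwa [ouC_self, one_mul, hn21] at h
        rw [hc]
        field_simp [e1, e2]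
        ring
      · rw [if_neg hin, hA1, hA2]
        have hc : ouC β s i (n - 1) = ouC β s i (n - 2) * ouP β s (n - 2) := by
          have h := ouC_mul_right β n s hs (show i ≤ n - 2 by omega) (by omega)
          rwa [hn21] at h
        rw [hc]
        field_simp [e1, e2]
        ring
    · -- interior column: 1 ≤ l ≤ n - 2
      have hl1 : 1 ≤ l := by omega
      have hl2 : l + 1 < n := by omega
      have hsub : ({l - 1, l, l + 1} : Finset ℕ) ⊆ Finset.range n := by
        intro x hx
        simp only [Finset.mem_insert, Finset.mem_singleton] at hx
        simp only [Finset.mem_range]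
        omega
      rw [← Finset.sum_subset hsub (by
        intro x hx hx'
        simp only [Finset.mem_insert, Finset.mem_singleton, not_or] at hx'
        rw [ouA, if_neg hx'.2.1, if_neg (by omega), if_neg (by omega), mul_zero])]
      rw [show ({l - 1, l, l + 1} : Finset ℕ) = insert (l - 1) {l, l + 1} from rfl,
        Finset.sum_insert (by
          simp only [Finset.mem_insert, Finset.mem_singleton]
          omega),
        Finset.sum_pair (show l ≠ l + 1 by omega)]
      have hAm : ouA n (ouP β s) (l - 1) l = ouP β s (l - 1) / (ouP β s (l - 1) ^ 2 - 1) := by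
        rw [ouA, if_neg (by omega), if_pos (by omega)]
      have hAd : ouA n (ouP β s) l l
          = 1 / (1 - ouP β s l ^ 2) + ouP β s (l - 1) ^ 2 / (1 - ouP β s (l - 1) ^ 2) := by
        rw [ouA, if_pos rfl, if_neg hl0, if_neg hln]
      have hAp : ouA n (ouP β s) (l + 1) l = ouP β s l / (ouP β s l ^ 2 - 1) := by
        rw [ouA, if_neg (by omega), if_neg (by omega), if_pos rfl]
      have hd1 := ou_sq_pos β hβ n s hs hl2
      have hd2 := ou_sq_pos β hβ n s hs (show l - 1 + 1 < n by omega)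
      have e1 : 1 - ouP β s l ^ 2 ≠ 0 := ne_of_gt hd1
      have e2 : ouP β s l ^ 2 - 1 ≠ 0 := by intro hx; exact e1 (by linarith)
      have e3 : 1 - ouP β s (l - 1) ^ 2 ≠ 0 := ne_of_gt hd2
      have e4 : ouP β s (l - 1) ^ 2 - 1 ≠ 0 := by intro hx; exact e3 (by linarith)
      have hl11 : l - 1 + 1 = l := by omega
      rcases lt_trichotomy i l with h | rfl | h
      · have hc1 : ouC β s i l = ouC β s i (l - 1) * ouP β s (l - 1) := by
          have hh := ouC_mul_right β n s hs (show i ≤ l - 1 by omega) (by omega)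
          rwa [hl11] at hh
        have hc2 : ouC β s i (l + 1) = ouC β s i l * ouP β s l :=
          ouC_mul_right β n s hs (le_of_lt h) hl2
        rw [if_neg (by omega), hAm, hAd, hAp, hc2, hc1]
        field_simp [e1, e2, e3, e4]
        ring
      · rw [if_pos rfl, hAm, hAd, hAp, ouC_self]
        have hcm : ouC β s i (i - 1) = ouP β s (i - 1) := by
          rw [ouC_symm]
          have hh := ouC_mul_right β n s hs (le_refl (i - 1)) (show i - 1 + 1 < n by omega)
          rwa [ouC_self, one_mul, hl11] at hh
        have hcp : ouC β s i (i + 1) = ouP β s i := by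
          have hh := ouC_mul_right β n s hs (le_refl i) hl2
          rwa [ouC_self, one_mul] at hh
        rw [hcm, hcp]
        field_simp [e1, e2, e3, e4]
        ring
      · have hc1 : ouC β s i l = ouP β s l * ouC β s i (l + 1) := by
          rw [ouC_symm, ouC_mul_left β n s hs h hi, ouC_symm β s (l + 1) i]
        have hc2 : ouC β s i (l - 1) = ouP β s (l - 1) * ouC β s i l := by
          rw [ouC_symm, ouC_mul_left β n s hs (show l - 1 < i by omega) hi, hl11,
            ouC_symm β s l i]
        rw [if_neg (by omega), hAm, hAd, hAp, hc2, hc1]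
        field_simp [e1, e2, e3, e4]
        ring

lemma ouA_fin (n : ℕ) (p : ℕ → ℝ) (k l : Fin n) :
    (if k = l then
        (if k.1 = 0 then 1 / (1 - p 0 ^ 2)
         else if k.1 = n - 1 then 1 / (1 - p (n - 2) ^ 2)
         else 1 / (1 - p k.1 ^ 2) + p (k.1 - 1) ^ 2 / (1 - p (k.1 - 1) ^ 2))
      else if l.1 = k.1 + 1 then p k.1 / (p k.1 ^ 2 - 1)
      else if k.1 = l.1 + 1 then p l.1 / (p l.1 ^ 2 - 1)
      else 0) = ouA n p k.1 l.1 := by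
  rw [ouA]
  exact if_congr (Fin.val_eq_val k l).symm rfl rfl

lemma ou_matrix_key (β : ℝ) (hβ : 0 < β) (n : ℕ) (hn : 2 ≤ n) (s : ℕ → ℝ)
    (hs : ∀ i, i + 1 < n → s i < s (i + 1)) :
    (Matrix.of fun i j : Fin n => ouC β s i.1 j.1)
      * (Matrix.of fun k l : Fin n => ouA n (ouP β s) k.1 l.1) = 1 := by
  ext i l
  rw [Matrix.mul_apply, Matrix.one_apply]
  simp only [Matrix.of_apply]
  rw [Fin.sum_univ_eq_sum_range (fun m => ouC β s i.1 m * ouA n (ouP β s) m l.1) n]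
  rw [ou_key β hβ n hn s hs i.2 l.2]
  exact if_congr (Fin.val_eq_val i l) rfl rfl

/-- The correlation matrix `C` of observations of an Ornstein–Uhlenbeck process
with covariance parameter `β` at points `s₁ < … < s_n` is invertible, and its
inverse is the explicit symmetric tridiagonal matrix `A`. -/
theorem OU_correlation_inverse (β : ℝ) (hβ : 0 < β) (n : ℕ) (hn : 2 ≤ n)
    (s : ℕ → ℝ) (hs : ∀ i, i + 1 < n → s i < s (i + 1)) :
    let p : ℕ → ℝ := fun i => exp (-β * (s (i + 1) - s i))
    let C : Matrix (Fin n) (Fin n) ℝ := Matrix.of fun i j => exp (-β * |s i.1 - s j.1|)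
    let A : Matrix (Fin n) (Fin n) ℝ := Matrix.of fun k l =>
      if k = l then
        (if k.1 = 0 then 1 / (1 - p 0 ^ 2)
         else if k.1 = n - 1 then 1 / (1 - p (n - 2) ^ 2)
         else 1 / (1 - p k.1 ^ 2) + p (k.1 - 1) ^ 2 / (1 - p (k.1 - 1) ^ 2))
      else if l.1 = k.1 + 1 then p k.1 / (p k.1 ^ 2 - 1)
      else if k.1 = l.1 + 1 then p l.1 / (p l.1 ^ 2 - 1)
      else 0
    IsUnit C.det ∧ C⁻¹ = A := by
  intro p C A
  have hA : A = Matrix.of fun k l : Fin n => ouA n (ouP β s) k.1 l.1 := by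
    ext k l
    exact ouA_fin n (ouP β s) k l
  have hCA : C * A = 1 := by
    rw [hA]
    exact ou_matrix_key β hβ n hn s hs
  exact ⟨Matrix.isUnit_det_of_right_inverse hCA, Matrix.inv_eq_right_inv hCA⟩
end
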